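/- arXiv:1609.09441 — 4 statements merged into one kernel-verified Lean document; each statement's English description precedes it below -/
import Mathlib

section
/- For all y, w ∈ V, the inequality ‖x(y) − x(w)‖ ≤ (‖A‖/σ)·‖y − w‖ holds. -/
open scoped RealInnerProductSpace

/-- For all `y, w ∈ V`, `‖x(y) − x(w)‖ ≤ (‖A‖/σ)·‖y − w‖`. -/
theorem primal_map_lipschitz
    {E V : Type*} [NormedAddCommGroup E] [InnerProductSpace ℝ E] [FiniteDimensional ℝ E]
    [NormedAddCommGroup V] [InnerProductSpace ℝ V] [FiniteDimensional ℝ V]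
    (A : E →L[ℝ] V) (σ : ℝ) (hσ : 0 < σ)
    (f : E → ℝ) (hf : StrongConvexOn Set.univ σ f)
    -- x(y) : the unique maximizer of x ↦ ⟨Aᵀy, x⟩ − f(x)
    (xv : V → E)
    (hxv : ∀ y, IsMaxOn (fun x => ⟪(ContinuousLinearMap.adjoint A) y, x⟫ - f x) Set.univ (xv y))
    (y w : V) :
    ‖xv y - xv w‖ ≤ (‖A‖ / σ) * ‖y - w‖ := by
  -- Key growth inequality at the maximizer.
  have key : ∀ (z : V) (x : E), σ / 2 * ‖x - xv z‖ ^ 2 ≤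
      (⟪(ContinuousLinearMap.adjoint A) z, xv z⟫ - f (xv z)) -
      (⟪(ContinuousLinearMap.adjoint A) z, x⟫ - f x) := by
    intro z x
    set p := xv z with hp
    set c := (ContinuousLinearMap.adjoint A) z with hc
    have h1 : ∀ t : ℝ, 0 < t → t < 1 →
        (1 - t) * (σ / 2 * ‖x - p‖ ^ 2) ≤ (⟪c, p⟫ - f p) - (⟪c, x⟫ - f x) := by
      intro t ht ht1
      have hconv := hf.2 (Set.mem_univ x) (Set.mem_univ p)
        (le_of_lt ht) (by linarith : (0:ℝ) ≤ 1 - t) (by ring)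
      have hmax := hxv z (Set.mem_univ (t • x + (1 - t) • p))
      simp only [Set.mem_setOf_eq] at hmax
      have hinner : ⟪c, t • x + (1 - t) • p⟫ = t * ⟪c, x⟫ + (1 - t) * ⟪c, p⟫ := by
        rw [inner_add_right, real_inner_smul_right, real_inner_smul_right]
      rw [hinner, ← hp, ← hc] at hmax
      simp only [smul_eq_mul] at hconv
      have h2 : t * ((1 - t) * (σ / 2 * ‖x - p‖ ^ 2)) ≤
          t * ((⟪c, p⟫ - f p) - (⟪c, x⟫ - f x)) := by nlinarith [hconv, hmax]
      exact le_of_mul_le_mul_left h2 ht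
    have htend : Filter.Tendsto (fun t : ℝ => (1 - t) * (σ / 2 * ‖x - p‖ ^ 2))
        (nhdsWithin 0 (Set.Ioi 0)) (nhds ((1 - 0) * (σ / 2 * ‖x - p‖ ^ 2))) := by
      apply Filter.Tendsto.mono_left _ nhdsWithin_le_nhds
      exact (Filter.Tendsto.const_sub _ Filter.tendsto_id).mul_const _
    have hev : ∀ᶠ t : ℝ in nhdsWithin 0 (Set.Ioi 0),
        (1 - t) * (σ / 2 * ‖x - p‖ ^ 2) ≤ (⟪c, p⟫ - f p) - (⟪c, x⟫ - f x) := by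
      filter_upwards [Ioo_mem_nhdsGT_of_mem (Set.left_mem_Ico.mpr one_pos)] with t ht
      exact h1 t ht.1 ht.2
    have := le_of_tendsto htend hev
    linarith
  have k1 := key y (xv w)
  have k2 := key w (xv y)
  set u := xv y
  set v := xv w
  have hsum : σ * ‖u - v‖ ^ 2 ≤ ⟪y - w, A (u - v)⟫ := by
    have e1 : ⟪(ContinuousLinearMap.adjoint A) (y - w), u - v⟫ = ⟪y - w, A (u - v)⟫ :=
      ContinuousLinearMap.adjoint_inner_left A (u - v) (y - w)
    have e2 : ⟪(ContinuousLinearMap.adjoint A) (y - w), u - v⟫ =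
        (⟪(ContinuousLinearMap.adjoint A) y, u⟫ - ⟪(ContinuousLinearMap.adjoint A) y, v⟫)
        - (⟪(ContinuousLinearMap.adjoint A) w, u⟫ - ⟪(ContinuousLinearMap.adjoint A) w, v⟫) := by
      rw [map_sub, inner_sub_left, inner_sub_right, inner_sub_right]
    have hnorm : ‖v - u‖ = ‖u - v‖ := norm_sub_rev _ _
    rw [← e1, e2]
    rw [hnorm] at k1
    nlinarith [k1, k2]
  have hbound : ⟪y - w, A (u - v)⟫ ≤ ‖y - w‖ * (‖A‖ * ‖u - v‖) := by
    calc ⟪y - w, A (u - v)⟫ ≤ ‖y - w‖ * ‖A (u - v)‖ := real_inner_le_norm _ _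
    _ ≤ ‖y - w‖ * (‖A‖ * ‖u - v‖) := by
        exact mul_le_mul_of_nonneg_left (A.le_opNorm _) (norm_nonneg _)
  rcases eq_or_lt_of_le (norm_nonneg (u - v)) with h0 | h0
  · rw [← h0]
    positivity
  · rw [div_mul_eq_mul_div, le_div_iff₀ hσ]
    nlinarith [hsum, hbound]
end

section
/- For any y ∈ V and L > 0, writing p := p_L(y), x(p) for the corresponding primal vector, and z(p) := v_L(y), the primal-dual gap of the constrained reformulation satisfies f(x(p)) + g(z(p)) − q(p) ≤ (L + L_F)·‖p‖·‖p − y‖. -/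
/-!
Strong convexity of `f` makes the primal maximizer `x(·)` Lipschitz with constant `‖A‖ / σ`, and
the optimality condition of the proximal step says that `z = v_L(y)` minimizes `g z + ⟪p, z⟫` for
`p = p_L(y)`. Hence `(x(p), v_L(y))` minimizes the Lagrangian at `p`, so `q(p)` is its value there
and the gap equals `⟪p, A x(p) - v_L(y)⟫ = ⟪p, A (x(p) - x(y))⟫ + L ⟪p, y - p⟫`, which
Cauchy–Schwarz bounds by `(‖A‖² / σ + L) ‖p‖ ‖p - y‖`.
-/

open scoped RealInnerProductSpace
open Set Filter Topology

lemma le_of_forall_le_add_mul {a b c : ℝ} (h : ∀ t, 0 < t → t < 1 → a ≤ b + t * c) : a ≤ b := by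
  have hlim : Tendsto (fun t => b + t * c) (𝓝[>] 0) (𝓝 b) := by
    have hcont : Continuous fun t : ℝ => b + t * c := by fun_prop
    simpa using (hcont.tendsto 0).mono_left nhdsWithin_le_nhds
  exact ge_of_tendsto hlim <| by
    filter_upwards [Ioo_mem_nhdsGT one_pos] with t ht using h t ht.1 ht.2

section StrongConvex

variable {E : Type*} [NormedAddCommGroup E] [InnerProductSpace ℝ E] {s : Set E} {m : ℝ} {f : E → ℝ}

lemma StrongConvexOn.add_sq_le_of_isMinOn {x₀ x : E} (hf : StrongConvexOn s m f)
    (hmin : IsMinOn f s x₀) (hx₀ : x₀ ∈ s) (hx : x ∈ s) :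
    f x₀ + m / 2 * ‖x - x₀‖ ^ 2 ≤ f x := by
  refine le_of_forall_le_add_mul (c := m / 2 * ‖x - x₀‖ ^ 2) fun t ht0 ht1 => ?_
  have hconv := hf.2 hx₀ hx (sub_nonneg.2 ht1.le) ht0.le (sub_add_cancel 1 t)
  have hle : f x₀ ≤ f ((1 - t) • x₀ + t • x) :=
    hmin (hf.1 hx₀ hx (sub_nonneg.2 ht1.le) ht0.le (sub_add_cancel 1 t))
  rw [smul_eq_mul, smul_eq_mul, norm_sub_rev] at hconv
  have key : t * (f x₀ + m / 2 * ‖x - x₀‖ ^ 2) ≤ t * (f x + t * (m / 2 * ‖x - x₀‖ ^ 2)) := by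
    nlinarith
  exact le_of_mul_le_mul_left key ht0

lemma StrongConvexOn.sub_inner (hf : StrongConvexOn s m f) (c : E) :
    StrongConvexOn s m (fun x => f x - ⟪c, x⟫) := by
  simpa [StrongConvexOn] using!
    hf.sub ((innerSL ℝ c).toLinearMap.concaveOn hf.1).uniformConcaveOn_zero

lemma StrongConvexOn.sub_inner_add_sq_le_of_isMaxOn {c x₀ x : E} (hf : StrongConvexOn s m f)
    (hmax : IsMaxOn (fun x => ⟪c, x⟫ - f x) s x₀) (hx₀ : x₀ ∈ s) (hx : x ∈ s) :
    f x₀ - ⟪c, x₀⟫ + m / 2 * ‖x - x₀‖ ^ 2 ≤ f x - ⟪c, x⟫ :=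
  (hf.sub_inner c).add_sq_le_of_isMinOn (by simpa only [neg_sub] using hmax.neg) hx₀ hx

lemma StrongConvexOn.mul_norm_sub_le_of_isMaxOn {c₁ c₂ x₁ x₂ : E} (hf : StrongConvexOn s m f)
    (h₁ : IsMaxOn (fun x => ⟪c₁, x⟫ - f x) s x₁) (h₂ : IsMaxOn (fun x => ⟪c₂, x⟫ - f x) s x₂)
    (hx₁ : x₁ ∈ s) (hx₂ : x₂ ∈ s) :
    m * ‖x₁ - x₂‖ ≤ ‖c₁ - c₂‖ := by
  have e₁ := hf.sub_inner_add_sq_le_of_isMaxOn h₁ hx₁ hx₂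
  have e₂ := hf.sub_inner_add_sq_le_of_isMaxOn h₂ hx₂ hx₁
  have hmono : m * ‖x₁ - x₂‖ * ‖x₁ - x₂‖ ≤ ‖c₁ - c₂‖ * ‖x₁ - x₂‖ :=
    calc m * ‖x₁ - x₂‖ * ‖x₁ - x₂‖ ≤ ⟪c₁ - c₂, x₁ - x₂⟫ := by
          rw [norm_sub_rev x₂] at e₁
          simp only [inner_sub_left, inner_sub_right]
          nlinarith
      _ ≤ ‖c₁ - c₂‖ * ‖x₁ - x₂‖ := real_inner_le_norm _ _
  rcases (norm_nonneg (x₁ - x₂)).eq_or_lt with h0 | h0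
  · rw [← h0, mul_zero]
    exact norm_nonneg _
  · exact le_of_mul_le_mul_right hmono h0

lemma StrongConvexOn.mul_norm_sub_le_of_isMaxOn_adjoint {V : Type*} [NormedAddCommGroup V]
    [InnerProductSpace ℝ V] [CompleteSpace E] [CompleteSpace V] (hf : StrongConvexOn univ m f)
    (A : E →L[ℝ] V) {y₁ y₂ : V} {x₁ x₂ : E}
    (h₁ : IsMaxOn (fun x => ⟪ContinuousLinearMap.adjoint A y₁, x⟫ - f x) univ x₁)
    (h₂ : IsMaxOn (fun x => ⟪ContinuousLinearMap.adjoint A y₂, x⟫ - f x) univ x₂) :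
    m * ‖x₁ - x₂‖ ≤ ‖A‖ * ‖y₁ - y₂‖ :=
  calc m * ‖x₁ - x₂‖ ≤ ‖ContinuousLinearMap.adjoint A (y₁ - y₂)‖ := by
        simpa only [map_sub] using hf.mul_norm_sub_le_of_isMaxOn h₁ h₂ (mem_univ _) (mem_univ _)
    _ ≤ ‖A‖ * ‖y₁ - y₂‖ := by
        simpa only [LinearIsometryEquiv.norm_map] using
          (ContinuousLinearMap.adjoint A).le_opNorm (y₁ - y₂)

lemma strongConvexOn_half_norm_sub_sq (hs : Convex ℝ s) (c : E) :
    StrongConvexOn s 1 (fun z => 1 / 2 * ‖z - c‖ ^ 2) := by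
  rw [strongConvexOn_iff_convex]
  refine (convexOn_const (1 / 2 * ‖c‖ ^ 2) hs |>.sub
    ((innerSL ℝ c).toLinearMap.concaveOn hs)).congr fun z _ => ?_
  simp [norm_sub_sq_real, real_inner_comm]
  ring

lemma ConvexOn.isMinOn_add_inner_of_isMinOn_prox {g : E → ℝ} (hg : ConvexOn ℝ s g) {L : ℝ}
    (hL : 0 < L) {c z₀ : E} (hmin : IsMinOn (fun z => L * g z + 1 / 2 * ‖z - c‖ ^ 2) s z₀)
    (hz₀ : z₀ ∈ s) :
    IsMinOn (fun z => g z + ⟪L⁻¹ • (z₀ - c), z⟫) s z₀ := by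
  have hstrong : StrongConvexOn s 1 (fun z => L * g z + 1 / 2 * ‖z - c‖ ^ 2) := by
    simpa [StrongConvexOn] using!
      (hg.smul hL.le).uniformConvexOn_zero.add (strongConvexOn_half_norm_sub_sq hg.1 c)
  intro z hz
  -- expanding `‖z - c‖²` around `z₀` turns quadratic growth into the subgradient inequality
  have key := hstrong.add_sq_le_of_isMinOn hmin hz₀ hz
  rw [show z - c = (z - z₀) + (z₀ - c) by abel, norm_add_sq_real, real_inner_comm,
    inner_sub_right] at key
  refine le_of_mul_le_mul_left ?_ hL
  simp only [real_inner_smul_left, mul_add, ← mul_assoc, mul_inv_cancel₀ hL.ne', one_mul]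
  linarith

end StrongConvex

lemma IsGLB.eq_lagrangian_of_isMinOn {E V : Type*} [NormedAddCommGroup V] [InnerProductSpace ℝ V]
    {f : E → ℝ} {g : V → ℝ} {A : E → V} {w : V} {q : ℝ} {x₀ : E} {z₀ : V}
    (hq : IsGLB {r : ℝ | ∃ x z, r = f x + g z - ⟪w, A x - z⟫} q)
    (hx₀ : IsMinOn (fun x => f x - ⟪w, A x⟫) univ x₀)
    (hz₀ : IsMinOn (fun z => g z + ⟪w, z⟫) univ z₀) :
    q = f x₀ + g z₀ - ⟪w, A x₀ - z₀⟫ := by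
  refine hq.unique (IsLeast.isGLB ⟨⟨x₀, z₀, rfl⟩, ?_⟩)
  rintro r ⟨x, z, rfl⟩
  have hx : f x₀ - ⟪w, A x₀⟫ ≤ f x - ⟪w, A x⟫ := hx₀ (mem_univ x)
  have hz : g z₀ + ⟪w, z₀⟫ ≤ g z + ⟪w, z⟫ := hz₀ (mem_univ z)
  rw [inner_sub_right, inner_sub_right]
  linarith

/-- For any `y ∈ V` and `L > 0`, writing `p := p_L(y)`, `x(p)` for the
corresponding primal vector, and `z(p) := v_L(y)`, the primal-dual gap of the constrained
reformulation satisfies `f(x(p)) + g(z(p)) − q(p) ≤ (L + L_F)·‖p‖·‖p − y‖`,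
where `L_F := ‖A‖²/σ`. -/
theorem primal_dual_gap_constrained
    {E V : Type*} [NormedAddCommGroup E] [InnerProductSpace ℝ E] [FiniteDimensional ℝ E]
    [NormedAddCommGroup V] [InnerProductSpace ℝ V] [FiniteDimensional ℝ V]
    (A : E →L[ℝ] V) (σ : ℝ) (hσ : 0 < σ)
    (f : E → ℝ) (hf : StrongConvexOn Set.univ σ f)
    (g : V → ℝ) (hg : ConvexOn ℝ Set.univ g)
    -- x(y) : the unique maximizer of x ↦ ⟨Aᵀy, x⟩ − f(x)
    (xv : V → E)
    (hxv : ∀ y, IsMaxOn (fun x => ⟪(ContinuousLinearMap.adjoint A) y, x⟫ - f x) Set.univ (xv y))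
    -- q : the dual function q(y) = inf_{x,z} { f(x) + g(z) − ⟨y, Ax − z⟩ }
    (q : V → ℝ)
    (hq : ∀ y, IsGLB {r : ℝ | ∃ x z, r = f x + g z - ⟪y, A x - z⟫} (q y))
    -- v_L(y) : the unique minimizer of z ↦ L·g(z) + (1/2)‖z − (A x(y) − L y)‖²
    (v : ℝ → V → V)
    (hv : ∀ L, 0 < L → ∀ y,
      IsMinOn (fun z => L * g z + (1/2) * ‖z - (A (xv y) - L • y)‖^2) Set.univ (v L y))
    -- p_L(y) := y − (1/L)(A x(y) − v_L(y))
    (p : ℝ → V → V)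
    (hp : ∀ L y, p L y = y - (1/L) • (A (xv y) - v L y))
    (y : V) (L : ℝ) (hL : 0 < L) :
    f (xv (p L y)) + g (v L y) - q (p L y)
      ≤ (L + ‖A‖^2 / σ) * ‖p L y‖ * ‖p L y - y‖ := by
  set P := p L y
  have hP : P = y - (1 / L) • (A (xv y) - v L y) := hp L y
  have hstep : A (xv y) - v L y = L • (y - P) := by
    rw [hP, sub_sub_cancel, smul_smul, mul_one_div_cancel hL.ne', one_smul]
  have hsub : L⁻¹ • (v L y - (A (xv y) - L • y)) = P := by
    rw [smul_sub, smul_sub, inv_smul_smul₀ hL.ne', hP, one_div, smul_sub]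
    abel
  have hgmin : IsMinOn (fun z => g z + ⟪P, z⟫) univ (v L y) := by
    simpa only [hsub] using hg.isMinOn_add_inner_of_isMinOn_prox hL (hv L hL y) (mem_univ _)
  have hfmin : IsMinOn (fun x => f x - ⟪P, A x⟫) univ (xv P) := by
    simpa only [neg_sub, ContinuousLinearMap.adjoint_inner_left] using (hxv P).neg
  have hlip := hf.mul_norm_sub_le_of_isMaxOn_adjoint A (hxv P) (hxv y)
  rw [(hq P).eq_lagrangian_of_isMinOn hfmin hgmin]
  calc f (xv P) + g (v L y) - (f (xv P) + g (v L y) - ⟪P, A (xv P) - v L y⟫)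
      = ⟪P, A (xv P - xv y)⟫ + L * ⟪P, y - P⟫ := by
        rw [map_sub, ← real_inner_smul_right, ← hstep, ← inner_add_right, sub_add_sub_cancel]
        ring
    _ ≤ ‖P‖ * (‖A‖ * ‖xv P - xv y‖) + L * (‖P‖ * ‖P - y‖) := by
        gcongr
        · exact (real_inner_le_norm _ _).trans (by gcongr; exact A.le_opNorm _)
        · exact (real_inner_le_norm _ _).trans_eq (by rw [norm_sub_rev])
    _ ≤ ‖P‖ * (‖A‖ * (‖A‖ * ‖P - y‖ / σ)) + L * (‖P‖ * ‖P - y‖) := by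
        gcongr
        rwa [le_div_iff₀' hσ]
    _ = (L + ‖A‖ ^ 2 / σ) * ‖P‖ * ‖P - y‖ := by ring
end

section
/- Let {y_k, w_k} be the sequences generated by the GFDPG method. Then for any k ≥ 1, q̃(y_k) − q̃(y_*) ≤ L_k·‖y_0 − y_*‖² / (2·T_{k−1}). -/
/-!
Each iteration is a proximal gradient step: strong convexity of the model `Q_L(·, w)`, the
descent condition and the gradient inequality for `F` give, for `p = p_L(w)` and every `x`,
`q̃ p + L/2 ‖x - p‖² ≤ q̃ x + L/2 ‖x - w‖²`.
With the estimate sequence `u 0 = y 0`, `u (k+1) = u k + t k • (y (k+1) - w k)`, the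
extrapolation rule says precisely that `w k = ((T k - t k) • y k + t k • u k) / T k`.
Testing the inequality at `x = ((T k - t k) • y k + t k • y_*) / T k` and using convexity of `q̃`
and `t k ^ 2 ≤ T k` yields, by induction on `k`,
`T (k-1) (q̃ (y k) - q̃ y_*) + L k / 2 ‖y_* - u k‖² ≤ L k / 2 ‖y 0 - y_*‖²`,
where the growth of `L k` is absorbed because `‖y_* - u k‖ ≤ ‖y 0 - y_*‖`.
-/

open scoped RealInnerProductSpace
open Set Filter Topology

theorem ConvexOn.add_fderiv_sub_le {E : Type*} [NormedAddCommGroup E] [NormedSpace ℝ E]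
    {s : Set E} {f : E → ℝ} {f' : E →L[ℝ] ℝ} {w x : E} (hf : ConvexOn ℝ s f)
    (hw : w ∈ s) (hx : x ∈ s) (h : HasFDerivAt f f' w) :
    f w + f' (x - w) ≤ f x := by
  let ℓ : ℝ →ᵃ[ℝ] E := AffineMap.lineMap w x
  have hline : HasDerivAt (f ∘ ℓ) (f' (x - w)) 0 :=
    (AffineMap.lineMap_apply_zero (k := ℝ) w x ▸ h).comp_hasDerivAt 0 AffineMap.hasDerivAt_lineMap
  have hslope := (hf.comp_affineMap ℓ).le_slope_of_hasDerivAt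
    (by simpa [ℓ] using hw) (by simpa [ℓ] using hx) zero_lt_one hline
  simp only [slope_def_field, Function.comp_apply, AffineMap.lineMap_apply_one,
    AffineMap.lineMap_apply_zero, sub_zero, div_one, ℓ] at hslope
  linarith

section

variable {V : Type*} [NormedAddCommGroup V] [InnerProductSpace ℝ V]

theorem norm_smul_add_smul_sub_sq {a b : ℝ} (hab : a + b = 1) (x y c : V) :
    ‖a • x + b • y - c‖ ^ 2 = a * ‖x - c‖ ^ 2 + b * ‖y - c‖ ^ 2 - a * b * ‖x - y‖ ^ 2 := by
  obtain rfl := eq_sub_of_add_eq' hab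
  rw [show a • x + (1 - a) • y - c = a • (x - c) + (1 - a) • (y - c) by module,
    show x - y = (x - c) - (y - c) by abel, norm_add_sq_real, norm_sub_sq_real (x - c),
    norm_smul, norm_smul, real_inner_smul_left, real_inner_smul_right, mul_pow, mul_pow,
    Real.norm_eq_abs, Real.norm_eq_abs, sq_abs, sq_abs]
  ring

theorem strongConvexOn_sq_norm_sub {s : Set V} (hs : Convex ℝ s) (m : ℝ) (c : V) :
    StrongConvexOn s m (fun y ↦ m / 2 * ‖y - c‖ ^ 2) :=
  ⟨hs, fun x _ y _ a b _ _ hab ↦ le_of_eq <| by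
    simp only [smul_eq_mul, norm_smul_add_smul_sub_sq hab]; ring⟩

theorem ConvexOn.strongConvexOn_add_sq_norm_sub {s : Set V} {φ : V → ℝ} (hφ : ConvexOn ℝ s φ)
    (m : ℝ) (c : V) : StrongConvexOn s m (fun y ↦ φ y + m / 2 * ‖y - c‖ ^ 2) := by
  have h := hφ.uniformConvexOn_zero.add (strongConvexOn_sq_norm_sub hφ.1 m c)
  rwa [zero_add] at h

theorem StrongConvexOn.add_sq_norm_sub_le_of_isMinOn {s : Set V} {f : V → ℝ} {m : ℝ} {p x : V}
    (hf : StrongConvexOn s m f) (hp : IsMinOn f s p) (hps : p ∈ s) (hx : x ∈ s) :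
    f p + m / 2 * ‖x - p‖ ^ 2 ≤ f x := by
  -- compare `p` with the points of the segment `[p, x]` and let them tend to `p`
  have key : ∀ θ ∈ Ioo (0 : ℝ) 1, f p + (1 - θ) * (m / 2 * ‖x - p‖ ^ 2) ≤ f x := by
    rintro θ ⟨hθ0, hθ1⟩
    have hmin := hp (hf.1 hps hx (sub_nonneg.2 hθ1.le) hθ0.le (sub_add_cancel 1 θ))
    have hconv := hf.2 hps hx (sub_nonneg.2 hθ1.le) hθ0.le (sub_add_cancel 1 θ)
    rw [norm_sub_rev] at hconv
    simp only [smul_eq_mul, mem_ofPred_eq] at hmin hconv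
    refine le_of_mul_le_mul_left ?_ hθ0
    linear_combination hmin.trans hconv
  have hlim : Tendsto (fun θ : ℝ ↦ f p + (1 - θ) * (m / 2 * ‖x - p‖ ^ 2)) (𝓝[>] 0)
      (𝓝 (f p + (1 - 0) * (m / 2 * ‖x - p‖ ^ 2))) :=
    (Continuous.tendsto (by fun_prop) 0).mono_left nhdsWithin_le_nhds
  simpa using le_of_tendsto hlim (eventually_of_mem (Ioo_mem_nhdsGT zero_lt_one) key)

/-- The paper's `Q_L(y, w)`, with `g` standing for `∇F(w)`. -/
noncomputable def proxGradModel (F G : V → ℝ) (g w : V) (L : ℝ) (y : V) : ℝ :=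
  F w + ⟪y - w, g⟫ + L / 2 * ‖y - w‖ ^ 2 + G y

theorem add_sq_norm_sub_le_of_isMinOn_proxGradModel [CompleteSpace V] {F G : V → ℝ} {g w p : V}
    {L : ℝ} (hF : ConvexOn ℝ univ F) (hG : ConvexOn ℝ univ G) (hg : HasGradientAt F g w)
    (hp : IsMinOn (proxGradModel F G g w L) univ p)
    (hdesc : F p + G p ≤ proxGradModel F G g w L p) (x : V) :
    F p + G p + L / 2 * ‖x - p‖ ^ 2 ≤ F x + G x + L / 2 * ‖x - w‖ ^ 2 := by
  have hlin : ConvexOn ℝ univ (fun y ↦ F w + ⟪y - w, g⟫ + G y) := by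
    refine ((((innerₛₗ ℝ g).convexOn convex_univ).add_const (F w - ⟪w, g⟫)).add hG).congr ?_
    intro y _
    simp only [Pi.add_apply, innerₛₗ_apply_apply, real_inner_comm g, inner_sub_right]
    ring
  have hstrong := (hlin.strongConvexOn_add_sq_norm_sub L w).add_sq_norm_sub_le_of_isMinOn
    (p := p) (x := x) (by convert hp using 2; simp only [proxGradModel]; ring) trivial trivial
  have hgrad : F w + ⟪x - w, g⟫ ≤ F x := by
    simpa [InnerProductSpace.toDual_apply_apply, real_inner_comm] using
      hF.add_fderiv_sub_le trivial trivial hg.hasFDerivAt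
  simp only [proxGradModel] at hdesc
  linarith

namespace GFDPG

def auxSeq (y w : ℕ → V) (t : ℕ → ℝ) : ℕ → V
  | 0 => y 0
  | n + 1 => auxSeq y w t n + t n • (y (n + 1) - w n)

theorem w_eq_auxSeq_combination {y w : ℕ → V} {t T : ℕ → ℝ} (hw0 : w 0 = y 0)
    (ht : ∀ n, t n ≠ 0) (hT : ∀ n, T n ≠ 0)
    (hw : ∀ k : ℕ, w (k+1) = y (k+1)
      + (((T k - t k) * t (k+1)) / (t k * T (k+1))) • (y (k+1) - y k)
      + (((t k ^ 2 - T k) * t (k+1)) / (t k * T (k+1))) • (y (k+1) - w k))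
    (n : ℕ) : w n = ((T n - t n) / T n) • y n + (t n / T n) • auxSeq y w t n := by
  induction n with
  | zero =>
    rw [hw0, auxSeq, ← add_smul, ← add_div, sub_add_cancel, div_self (hT 0), one_smul]
  | succ n ih =>
    rw [hw n, auxSeq, ih]
    have := ht n
    have := hT n
    have := hT (n + 1)
    match_scalars <;> field_simp <;> ring

theorem lyapunov_step {q : V → ℝ} (hq : ConvexOn ℝ univ q) {ys yk wk yk1 uk : V} {tk Tk L : ℝ}
    (ht : 0 < tk) (htT : tk ≤ Tk) (htsq : tk ^ 2 ≤ Tk) (hL : 0 ≤ L)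
    (hw : wk = ((Tk - tk) / Tk) • yk + (tk / Tk) • uk)
    (hkey : ∀ x, q yk1 + L / 2 * ‖x - yk1‖ ^ 2 ≤ q x + L / 2 * ‖x - wk‖ ^ 2) :
    Tk * (q yk1 - q ys) + L / 2 * ‖ys - (uk + tk • (yk1 - wk))‖ ^ 2
      ≤ (Tk - tk) * (q yk - q ys) + L / 2 * ‖ys - uk‖ ^ 2 := by
  have hT : 0 < Tk := ht.trans_le htT
  obtain ⟨θ, hθ0, hθ1, rfl⟩ : ∃ θ, 0 ≤ θ ∧ θ ≤ 1 ∧ tk = Tk * θ :=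
    ⟨tk / Tk, by positivity, div_le_one_of_le₀ htT hT.le, by field_simp⟩
  have hw' : wk = (1 - θ) • yk + θ • uk := by
    rw [hw]; match_scalars <;> field_simp
  set xθ := (1 - θ) • yk + θ • ys
  have hconv : q xθ ≤ (1 - θ) * q yk + θ * q ys :=
    hq.2 trivial trivial (sub_nonneg.2 hθ1) hθ0 (sub_add_cancel 1 θ)
  have hxw : xθ - wk = θ • (ys - uk) := by rw [hw']; module
  have hkey' := hkey xθ
  rw [show xθ - yk1 = θ • (ys - uk) - (yk1 - wk) by rw [← hxw]; abel, hxw, norm_sub_sq_real,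
    norm_smul, real_inner_smul_left, mul_pow, Real.norm_eq_abs, sq_abs] at hkey'
  rw [show ys - (uk + (Tk * θ) • (yk1 - wk)) = (ys - uk) - (Tk * θ) • (yk1 - wk) by abel,
    norm_sub_sq_real, norm_smul, real_inner_smul_right, mul_pow, Real.norm_eq_abs, sq_abs]
  linear_combination Tk * hkey' + Tk * hconv + (L / 2 * ‖yk1 - wk‖ ^ 2) * htsq

theorem le_div_of_lyapunov_step {a r t T L : ℕ → ℝ} (ha : ∀ n, 0 ≤ a (n + 1))
    (hr : ∀ n, 0 ≤ r n) (hT : ∀ n, 0 < T n) (hL : ∀ n, 0 < L n)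
    (hLmono : ∀ n, L n ≤ L (n + 1)) (hT0 : T 0 = t 0)
    (hTsucc : ∀ n, T (n + 1) = T n + t (n + 1))
    (hstep : ∀ n, T n * a (n + 1) + L (n + 1) / 2 * r (n + 1)
      ≤ (T n - t n) * a n + L (n + 1) / 2 * r n) (m : ℕ) :
    a (m + 1) ≤ L (m + 1) * r 0 / (2 * T m) := by
  have henergy (m : ℕ) : T m * a (m + 1) + L (m + 1) / 2 * r (m + 1) ≤ L (m + 1) / 2 * r 0 := by
    induction m with
    | zero => simpa [hT0] using hstep 0
    | succ m ih =>
      have hdecay : r (m + 1) ≤ r 0 := by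
        nlinarith [mul_nonneg (hT m).le (ha m), hL (m + 1)]
      have hstep' := hstep (m + 1)
      rw [show T (m + 1) - t (m + 1) = T m by rw [hTsucc]; ring] at hstep'
      nlinarith [mul_le_mul_of_nonneg_right (hLmono (m + 1)) (sub_nonneg.2 hdecay)]
  rw [le_div_iff₀ (mul_pos two_pos (hT m))]
  nlinarith [henergy m, hr (m + 1), hL (m + 1)]

end GFDPG

end

open GFDPG in
theorem gfdpg_dual_cost_bound_general
    {V : Type*} [NormedAddCommGroup V] [InnerProductSpace ℝ V] [FiniteDimensional ℝ V]
    (F G : V → ℝ)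
    (hF : ConvexOn ℝ Set.univ F) (hG : ConvexOn ℝ Set.univ G)
    (F' : V → V) (hF' : ∀ y, HasGradientAt F (F' y) y)
    -- q̃ := F + G attains its minimum at y_*
    (ystar : V) (hystar : ∀ y, F ystar + G ystar ≤ F y + G y)
    -- p_L(w) : the unique minimizer over y of Q_L(y, w)
    (P : ℝ → V → V)
    (hP : ∀ L, 0 < L → ∀ w, IsMinOn
      (fun y => F w + ⟪y - w, F' w⟫ + L / 2 * ‖y - w‖^2 + G y) Set.univ (P L w))
    -- the GFDPG method
    (y w : ℕ → V) (t T Lk : ℕ → ℝ)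
    (hw0 : w 0 = y 0) (hL0 : 0 < Lk 0)
    (ht0pos : 0 < t 0) (ht0le : t 0 ≤ 1)
    (hT : ∀ k : ℕ, T k = ∑ i ∈ Finset.range (k+1), t i)
    (hLmono : ∀ k : ℕ, Lk k ≤ Lk (k+1))
    (hdesc : ∀ k : ℕ,
      F (P (Lk (k+1)) (w k)) + G (P (Lk (k+1)) (w k)) ≤
        F (w k) + ⟪P (Lk (k+1)) (w k) - w k, F' (w k)⟫
          + Lk (k+1) / 2 * ‖P (Lk (k+1)) (w k) - w k‖^2 + G (P (Lk (k+1)) (w k)))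
    (hy : ∀ k : ℕ, y (k+1) = P (Lk (k+1)) (w k))
    (htpos : ∀ k : ℕ, 0 < t (k+1)) (htsq : ∀ k : ℕ, t (k+1) ^ 2 ≤ T (k+1))
    (hw : ∀ k : ℕ, w (k+1) = y (k+1)
      + (((T k - t k) * t (k+1)) / (t k * T (k+1))) • (y (k+1) - y k)
      + (((t k ^ 2 - T k) * t (k+1)) / (t k * T (k+1))) • (y (k+1) - w k))
    (k : ℕ) (hk : 1 ≤ k) :
    (F (y k) + G (y k)) - (F ystar + G ystar)
      ≤ Lk k * ‖y 0 - ystar‖^2 / (2 * T (k-1)) := by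
  have ht (n : ℕ) : 0 < t n := by rcases n with _ | n; exacts [ht0pos, htpos n]
  have htT (n : ℕ) : t n ≤ T n :=
    hT n ▸ Finset.single_le_sum (fun i _ ↦ (ht i).le) (Finset.self_mem_range_succ n)
  have hTpos (n : ℕ) : 0 < T n := (ht n).trans_le (htT n)
  have hT0 : T 0 = t 0 := by simp [hT]
  have htsq' (n : ℕ) : t n ^ 2 ≤ T n := by
    rcases n with _ | n
    · rw [hT0, sq]; exact mul_le_of_le_one_left (ht 0).le ht0le
    · exact htsq n
  have hL (n : ℕ) : 0 < Lk n := hL0.trans_le (monotone_nat_of_le_succ hLmono n.zero_le)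
  have hkey (n : ℕ) (x : V) := hy n ▸ add_sq_norm_sub_le_of_isMinOn_proxGradModel hF hG
    (hF' (w n)) (hP _ (hL (n + 1)) (w n)) (hdesc n) x
  have hwu := w_eq_auxSeq_combination hw0 (fun n ↦ (ht n).ne') (fun n ↦ (hTpos n).ne') hw
  obtain ⟨m, rfl⟩ := Nat.exists_eq_add_of_le' hk
  rw [Nat.add_sub_cancel, norm_sub_rev]
  exact le_div_of_lyapunov_step (a := fun n ↦ (F + G) (y n) - (F + G) ystar)
    (r := fun n ↦ ‖ystar - auxSeq y w t n‖ ^ 2) (fun n ↦ sub_nonneg.2 (hystar _))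
    (fun n ↦ sq_nonneg _) hTpos hL hLmono hT0 (fun n ↦ by rw [hT, hT, Finset.sum_range_succ])
    (fun n ↦ lyapunov_step (hF.add hG) (ht n) (htT n) (htsq' n) (hL _).le (hwu n) (hkey n)) m

/-- Let `{y_k, w_k}` be the sequences generated by the GFDPG method. Then for any
`k ≥ 1`, `q̃(y_k) − q̃(y_*) ≤ L_k·‖y_0 − y_*‖² / (2·T_{k−1})`, where `q̃ := F + G`. -/
theorem gfdpg_dual_cost_bound
    {V : Type*} [NormedAddCommGroup V] [InnerProductSpace ℝ V] [FiniteDimensional ℝ V]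
    (F G : V → ℝ) (LF : ℝ)
    (hF : ConvexOn ℝ Set.univ F) (hG : ConvexOn ℝ Set.univ G)
    (F' : V → V) (hF' : ∀ y, HasGradientAt F (F' y) y)
    (hLip : ∀ y w : V, ‖F' y - F' w‖ ≤ LF * ‖y - w‖)
    -- q̃ := F + G attains its minimum at y_*
    (ystar : V) (hystar : ∀ y, F ystar + G ystar ≤ F y + G y)
    -- p_L(w) : the unique minimizer over y of Q_L(y, w)
    (P : ℝ → V → V)
    (hP : ∀ L, 0 < L → ∀ w, IsMinOn
      (fun y => F w + ⟪y - w, F' w⟫ + L / 2 * ‖y - w‖^2 + G y) Set.univ (P L w))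
    -- the GFDPG method
    (y w : ℕ → V) (t T Lk : ℕ → ℝ)
    (hw0 : w 0 = y 0) (hL0 : 0 < Lk 0)
    (ht0 : t 0 = T 0) (ht0pos : 0 < t 0) (ht0le : t 0 ≤ 1)
    (hT : ∀ k : ℕ, T k = ∑ i ∈ Finset.range (k+1), t i)
    (hLmono : ∀ k : ℕ, Lk k ≤ Lk (k+1))
    (hdesc : ∀ k : ℕ,
      F (P (Lk (k+1)) (w k)) + G (P (Lk (k+1)) (w k)) ≤
        F (w k) + ⟪P (Lk (k+1)) (w k) - w k, F' (w k)⟫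
          + Lk (k+1) / 2 * ‖P (Lk (k+1)) (w k) - w k‖^2 + G (P (Lk (k+1)) (w k)))
    (hy : ∀ k : ℕ, y (k+1) = P (Lk (k+1)) (w k))
    (htpos : ∀ k : ℕ, 0 < t (k+1)) (htsq : ∀ k : ℕ, t (k+1) ^ 2 ≤ T (k+1))
    (hw : ∀ k : ℕ, w (k+1) = y (k+1)
      + (((T k - t k) * t (k+1)) / (t k * T (k+1))) • (y (k+1) - y k)
      + (((t k ^ 2 - T k) * t (k+1)) / (t k * T (k+1))) • (y (k+1) - w k))
    (k : ℕ) (hk : 1 ≤ k) :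
    (F (y k) + G (y k)) - (F ystar + G ystar)
      ≤ Lk k * ‖y 0 - ystar‖^2 / (2 * T (k-1)) :=
  gfdpg_dual_cost_bound_general F G hF hG F' hF' ystar hystar P hP y w t T Lk hw0 hL0 ht0pos ht0le
    hT hLmono hdesc hy htpos htsq hw k hk
end

section
/- Let {y_k, w_k} be the sequences generated by the GFDPG method. Then for any k ≥ 1 with Σ_{i=0}^{k−1} (T_i − t_i²) > 0, min_{1≤i≤k} ‖y_i − w_{i−1}‖ ≤ ‖y_0 − y_*‖ / √( Σ_{i=0}^{k−1} (T_i − t_i²) ). -/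
/-!
Write `v_i := y_{i+1} - w_i` and `m_n := y_0 - y_* + ∑_{i<n} t_i v_i`. The extrapolation rule for
`w` is exactly what keeps `t_n m_n = T_n w_n - (T_n - t_n) y_n - t_n y_*`. Adding the
proximal-gradient three-point inequality at `y_n` and at `y_*` with weights `T_n - t_n` and `t_n`
then shows that the energy `(T_n - t_n) / L_n · (q̃ y_n - q̃ y_*) + ‖m_n‖² / 2`, which starts at
`‖y_0 - y_*‖² / 2`, drops by at least `(T_n - t_n²) ‖v_n‖² / 2` per step (`T_{n+1} - t_{n+1} = T_n`
and `L_n ≤ L_{n+1}`). Hence `∑_{i<k} (T_i - t_i²) ‖v_i‖² ≤ ‖y_0 - y_*‖²`, and the smallest `‖v_i‖`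
is at most the weighted root mean square.
-/

open scoped RealInnerProductSpace
open Finset Filter Topology

theorem sum_range_le_of_add_le {E c : ℕ → ℝ} (hE : ∀ n, 0 ≤ E n)
    (h : ∀ n, E (n + 1) + c n ≤ E n) (k : ℕ) : ∑ i ∈ range k, c i ≤ E 0 := by
  have hsum : ∑ i ∈ range k, c i ≤ ∑ i ∈ range k, (E i - E (i + 1)) :=
    sum_le_sum fun i _ => le_sub_iff_add_le'.2 (h i)
  rw [sum_range_sub'] at hsum
  linarith [hE k]

theorem le_div_sqrt_of_le_of_weighted_sum_sq_le {k : ℕ} {a s : ℕ → ℝ} {M R : ℝ} (hM : 0 ≤ M)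
    (hMa : ∀ i ∈ range k, M ≤ a i) (hs : ∀ i ∈ range k, 0 ≤ s i) (hS : 0 < ∑ i ∈ range k, s i)
    (hR : 0 ≤ R) (hsum : ∑ i ∈ range k, s i * a i ^ 2 ≤ R ^ 2) :
    M ≤ R / √(∑ i ∈ range k, s i) := by
  have hMS : M ^ 2 * ∑ i ∈ range k, s i ≤ R ^ 2 := by
    rw [mul_sum]
    refine le_trans (sum_le_sum fun i hi => ?_) hsum
    rw [mul_comm]
    exact mul_le_mul_of_nonneg_left (pow_le_pow_left₀ hM (hMa i hi) 2) (hs i hi)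
  rw [le_div_iff₀ (Real.sqrt_pos.2 hS)]
  calc M * √(∑ i ∈ range k, s i) = √(M ^ 2 * ∑ i ∈ range k, s i) := by
        rw [Real.sqrt_mul (sq_nonneg M), Real.sqrt_sq hM]
    _ ≤ √(R ^ 2) := Real.sqrt_le_sqrt hMS
    _ = R := Real.sqrt_sq hR

section ProxGrad

variable {V : Type*} [NormedAddCommGroup V] [InnerProductSpace ℝ V]

theorem ConvexOn.add_inner_le_of_hasGradientAt [CompleteSpace V] {F : V → ℝ} {g w : V}
    (hF : ConvexOn ℝ Set.univ F) (hg : HasGradientAt F g w) (x : V) :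
    F w + ⟪x - w, g⟫ ≤ F x := by
  set φ : ℝ →ᵃ[ℝ] V := AffineMap.lineMap w x
  have hφ0 : φ 0 = w := AffineMap.lineMap_apply_zero w x
  have hφ1 : φ 1 = x := AffineMap.lineMap_apply_one w x
  have hline : ConvexOn ℝ Set.univ (F ∘ φ) := hF.comp_affineMap φ
  have hderiv : HasDerivAt (F ∘ φ) ⟪x - w, g⟫ 0 := by
    have hF0 : HasFDerivAt F (InnerProductSpace.toDual ℝ V g) (φ 0) := by
      rw [hφ0]; exact hg.hasFDerivAt
    simpa [real_inner_comm] using hF0.comp_hasDerivAt (0:ℝ) AffineMap.hasDerivAt_lineMap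
  have := hline.le_slope_of_hasDerivAt (Set.mem_univ 0) (Set.mem_univ 1) zero_lt_one hderiv
  simp only [slope_def_field, Function.comp_apply, hφ0, hφ1, sub_zero, div_one] at this
  linarith

theorem IsMinOn.inner_add_sub_nonneg_of_convexOn {G : V → ℝ} (hG : ConvexOn ℝ Set.univ G)
    {c L : ℝ} {g w p : V}
    (hmin : IsMinOn (fun y => c + ⟪y - w, g⟫ + L / 2 * ‖y - w‖ ^ 2 + G y) Set.univ p) (x : V) :
    0 ≤ ⟪x - p, g⟫ + L * ⟪x - p, p - w⟫ + G x - G p := by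
  set A := ⟪x - p, g⟫ + L * ⟪x - p, p - w⟫ + G x - G p
  set B := L / 2 * ‖x - p‖ ^ 2
  have hsegment : ∀ l ∈ Set.Ioo (0 : ℝ) 1, 0 ≤ A + l * B := by
    rintro l ⟨hl0, hl1⟩
    have hpt : p + l • (x - p) - w = (p - w) + l • (x - p) := by abel
    have hG' : G (p + l • (x - p)) ≤ (1 - l) * G p + l * G x := by
      have := hG.2 (Set.mem_univ p) (Set.mem_univ x) (by linarith : (0:ℝ) ≤ 1 - l) hl0.le
        (by ring)
      rwa [show (1 - l) • p + l • x = p + l • (x - p) by module, smul_eq_mul, smul_eq_mul] at this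
    have hm := hmin (Set.mem_univ (p + l • (x - p)))
    simp only [Set.mem_ofPred_eq, hpt, inner_add_left, real_inner_smul_left, norm_add_sq_real,
      real_inner_smul_right, norm_smul, Real.norm_eq_abs, mul_pow, sq_abs] at hm
    have hmul : 0 ≤ l * (A + l * B) := by
      simp only [A, B, real_inner_comm (p - w)]
      nlinarith
    exact nonneg_of_mul_nonneg_right hmul hl0
  have hlim : Tendsto (fun l : ℝ => A + l * B) (𝓝[>] 0) (𝓝 A) :=
    (Continuous.tendsto' (by fun_prop) 0 A (by simp)).mono_left nhdsWithin_le_nhds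
  exact ge_of_tendsto hlim (eventually_of_mem (Ioo_mem_nhdsGT zero_lt_one) hsegment)

theorem prox_grad_inequality [CompleteSpace V] {F G : V → ℝ} {L : ℝ} {g w p : V}
    (hF : ConvexOn ℝ Set.univ F) (hg : HasGradientAt F g w) (hG : ConvexOn ℝ Set.univ G)
    (hmin : IsMinOn (fun y => F w + ⟪y - w, g⟫ + L / 2 * ‖y - w‖ ^ 2 + G y) Set.univ p)
    (hdesc : F p + G p ≤ F w + ⟪p - w, g⟫ + L / 2 * ‖p - w‖ ^ 2 + G p) (x : V) :
    L / 2 * ‖p - w‖ ^ 2 + L * ⟪w - x, p - w⟫ ≤ (F x + G x) - (F p + G p) := by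
  have hFx := hF.add_inner_le_of_hasGradientAt hg x
  have hopt := hmin.inner_add_sub_nonneg_of_convexOn hG x
  have hg_split : ⟪x - p, g⟫ = ⟪x - w, g⟫ - ⟪p - w, g⟫ := by
    rw [← inner_sub_left, sub_sub_sub_cancel_right]
  have hstep_split : ⟪x - p, p - w⟫ = -⟪w - x, p - w⟫ - ‖p - w‖ ^ 2 := by
    rw [← real_inner_self_eq_norm_sq, ← inner_neg_left, ← inner_sub_left]
    congr 1
    abel
  rw [hg_split, hstep_split] at hopt
  linarith

theorem prox_grad_energy_step {q : V → ℝ} {L₀ L a b : ℝ} {w p y z m : V} (hL₀ : 0 < L₀)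
    (hL₀L : L₀ ≤ L) (ha : 0 ≤ a) (hb : 0 ≤ b) (hzy : q z ≤ q y)
    (hprox : ∀ x, L / 2 * ‖p - w‖ ^ 2 + L * ⟪w - x, p - w⟫ ≤ q x - q p)
    (hm : b • m = (a + b) • w - a • y - b • z) :
    (a + b) / L * (q p - q z) + ‖m + b • (p - w)‖ ^ 2 / 2 + (a + b - b ^ 2) * ‖p - w‖ ^ 2 / 2
      ≤ a / L₀ * (q y - q z) + ‖m‖ ^ 2 / 2 := by
  have hcomb : a * ⟪w - y, p - w⟫ + b * ⟪w - z, p - w⟫ = b * ⟪m, p - w⟫ := by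
    rw [← real_inner_smul_left, ← real_inner_smul_left, ← real_inner_smul_left, ← inner_add_left,
      hm]
    congr 1
    module
  have hsq : ‖m + b • (p - w)‖ ^ 2 = ‖m‖ ^ 2 + 2 * (b * ⟪m, p - w⟫) + b ^ 2 * ‖p - w‖ ^ 2 := by
    rw [norm_add_sq_real, real_inner_smul_right, norm_smul, Real.norm_eq_abs, mul_pow, sq_abs]
  have hy := mul_le_mul_of_nonneg_left (hprox y) ha
  have hz := mul_le_mul_of_nonneg_left (hprox z) hb
  have hscaled : L / 2 * ((a + b - b ^ 2) * ‖p - w‖ ^ 2)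
      + L / 2 * (‖m + b • (p - w)‖ ^ 2 - ‖m‖ ^ 2) ≤ a * (q y - q z) - (a + b) * (q p - q z) := by
    rw [hsq]
    linear_combination hy + hz - L * hcomb
  have hL : 0 < L := hL₀.trans_le hL₀L
  have hstepsize : a / L * (q y - q z) ≤ a / L₀ * (q y - q z) := by
    have := sub_nonneg.2 hzy
    gcongr
  have hdiv := div_nonpos_of_nonpos_of_nonneg (sub_nonpos.2 hscaled) hL.le
  have heq : (a + b) / L * (q p - q z) + ‖m + b • (p - w)‖ ^ 2 / 2
      + (a + b - b ^ 2) * ‖p - w‖ ^ 2 / 2 - (a / L * (q y - q z) + ‖m‖ ^ 2 / 2)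
      = (L / 2 * ((a + b - b ^ 2) * ‖p - w‖ ^ 2) + L / 2 * (‖m + b • (p - w)‖ ^ 2 - ‖m‖ ^ 2)
        - (a * (q y - q z) - (a + b) * (q p - q z))) / L := by
    field_simp
    ring
  linarith

theorem gfdpg_momentum_eq {y w : ℕ → V} {t T : ℕ → ℝ} (z : V) (hw0 : w 0 = y 0)
    (ht : ∀ n, 0 < t n) (hT : ∀ n, T n = ∑ i ∈ range (n + 1), t i)
    (hw : ∀ k : ℕ, w (k+1) = y (k+1)
      + (((T k - t k) * t (k+1)) / (t k * T (k+1))) • (y (k+1) - y k)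
      + (((t k ^ 2 - T k) * t (k+1)) / (t k * T (k+1))) • (y (k+1) - w k))
    (n : ℕ) :
    t n • (y 0 - z + ∑ i ∈ range n, t i • (y (i + 1) - w i))
      = T n • w n - (T n - t n) • y n - t n • z := by
  induction n with
  | zero =>
    rw [hT, sum_range_one, sum_range_zero, hw0]
    module
  | succ n ih =>
    have htn : t n ≠ 0 := (ht n).ne'
    have hTsucc : T (n + 1) = T n + t (n + 1) := by rw [hT, hT, sum_range_succ]
    have hTn : 0 < T n := hT n ▸ sum_pos (fun i _ => ht i) nonempty_range_add_one
    have hTn' : T n + t (n + 1) ≠ 0 := (add_pos hTn (ht (n + 1))).ne'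
    have hm : y 0 - z + ∑ i ∈ range n, t i • (y (i + 1) - w i)
        = (t n)⁻¹ • (T n • w n - (T n - t n) • y n - t n • z) := by
      rw [← ih, smul_smul, inv_mul_cancel₀ htn, one_smul]
    rw [sum_range_succ, ← add_assoc, hm, hw n, hTsucc]
    match_scalars <;> field_simp <;> ring

theorem gfdpg_weighted_sum_sq_le {q : V → ℝ} {z : V} (hz : ∀ x, q z ≤ q x)
    {y w : ℕ → V} {t T L : ℕ → ℝ} (hL : ∀ n, 0 < L n) (hLmono : ∀ n, L n ≤ L (n + 1))
    (hprox : ∀ n x, L (n + 1) / 2 * ‖y (n + 1) - w n‖ ^ 2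
      + L (n + 1) * ⟪w n - x, y (n + 1) - w n⟫ ≤ q x - q (y (n + 1)))
    (hw0 : w 0 = y 0) (ht : ∀ n, 0 < t n) (hT : ∀ n, T n = ∑ i ∈ range (n + 1), t i)
    (hw : ∀ k : ℕ, w (k+1) = y (k+1)
      + (((T k - t k) * t (k+1)) / (t k * T (k+1))) • (y (k+1) - y k)
      + (((t k ^ 2 - T k) * t (k+1)) / (t k * T (k+1))) • (y (k+1) - w k))
    (k : ℕ) :
    ∑ i ∈ range k, (T i - t i ^ 2) * ‖y (i + 1) - w i‖ ^ 2 ≤ ‖y 0 - z‖ ^ 2 := by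
  have htT : ∀ n, t n ≤ T n := fun n =>
    hT n ▸ single_le_sum (fun i _ => (ht i).le) (self_mem_range_succ n)
  set m : ℕ → V := fun n => y 0 - z + ∑ i ∈ range n, t i • (y (i + 1) - w i) with hm
  set E : ℕ → ℝ := fun n => (T n - t n) / L n * (q (y n) - q z) + ‖m n‖ ^ 2 / 2
  have hE : ∀ n, 0 ≤ E n := fun n => by
    have := div_nonneg (sub_nonneg.2 (htT n)) (hL n).le
    have := sub_nonneg.2 (hz (y n))
    positivity
  have hdecay : ∀ n, E (n + 1) + (T n - t n ^ 2) * ‖y (n + 1) - w n‖ ^ 2 / 2 ≤ E n := by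
    intro n
    have hmn : t n • m n = (T n - t n + t n) • w n - (T n - t n) • y n - t n • z := by
      rw [sub_add_cancel]
      exact gfdpg_momentum_eq z hw0 ht hT hw n
    have hm_succ : m (n + 1) = m n + t n • (y (n + 1) - w n) := by
      simp only [hm, sum_range_succ]
      abel
    have hT_succ : T (n + 1) - t (n + 1) = T n := by
      rw [hT (n + 1), hT n, sum_range_succ, add_sub_cancel_right]
    have hstep := prox_grad_energy_step (hL n) (hLmono n) (sub_nonneg.2 (htT n)) (ht n).le
      (hz (y n)) (hprox n) hmn
    rw [sub_add_cancel] at hstep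
    simpa only [E, hT_succ, hm_succ] using hstep
  have hsum := sum_range_le_of_add_le hE hdecay k
  have hT0 : T 0 = t 0 := by rw [hT, sum_range_one]
  simp only [E, hm, hT0, sub_self, zero_div, zero_mul, zero_add, range_zero, sum_empty, add_zero,
    ← sum_div] at hsum
  linarith

end ProxGrad

theorem gfdpg_inner_norm_bound_general
    {V : Type*} [NormedAddCommGroup V] [InnerProductSpace ℝ V] [FiniteDimensional ℝ V]
    (F G : V → ℝ)
    (hF : ConvexOn ℝ Set.univ F) (hG : ConvexOn ℝ Set.univ G)
    (F' : V → V) (hF' : ∀ y, HasGradientAt F (F' y) y)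
    -- q̃ := F + G attains its minimum at y_*
    (ystar : V) (hystar : ∀ y, F ystar + G ystar ≤ F y + G y)
    -- p_L(w) : the unique minimizer over y of Q_L(y, w)
    (P : ℝ → V → V)
    (hP : ∀ L, 0 < L → ∀ w, IsMinOn
      (fun y => F w + ⟪y - w, F' w⟫ + L / 2 * ‖y - w‖^2 + G y) Set.univ (P L w))
    -- the GFDPG method
    (y w : ℕ → V) (t T Lk : ℕ → ℝ)
    (hw0 : w 0 = y 0) (hL0 : 0 < Lk 0)
    (ht0pos : 0 < t 0) (ht0le : t 0 ≤ 1)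
    (hT : ∀ k : ℕ, T k = ∑ i ∈ Finset.range (k+1), t i)
    (hLmono : ∀ k : ℕ, Lk k ≤ Lk (k+1))
    (hdesc : ∀ k : ℕ,
      F (P (Lk (k+1)) (w k)) + G (P (Lk (k+1)) (w k)) ≤
        F (w k) + ⟪P (Lk (k+1)) (w k) - w k, F' (w k)⟫
          + Lk (k+1) / 2 * ‖P (Lk (k+1)) (w k) - w k‖^2 + G (P (Lk (k+1)) (w k)))
    (hy : ∀ k : ℕ, y (k+1) = P (Lk (k+1)) (w k))
    (htpos : ∀ k : ℕ, 0 < t (k+1)) (htsq : ∀ k : ℕ, t (k+1) ^ 2 ≤ T (k+1))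
    (hw : ∀ k : ℕ, w (k+1) = y (k+1)
      + (((T k - t k) * t (k+1)) / (t k * T (k+1))) • (y (k+1) - y k)
      + (((t k ^ 2 - T k) * t (k+1)) / (t k * T (k+1))) • (y (k+1) - w k))
    (k : ℕ) (hk : 1 ≤ k)
    (hsum : 0 < ∑ i ∈ Finset.range k, (T i - t i ^ 2)) :
    (Finset.Icc 1 k).inf' (Finset.nonempty_Icc.mpr hk) (fun i => ‖y i - w (i-1)‖)
      ≤ ‖y 0 - ystar‖ / Real.sqrt (∑ i ∈ Finset.range k, (T i - t i ^ 2)) := by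
  have ht : ∀ n, 0 < t n := fun n => n.casesOn ht0pos htpos
  have ht_sq : ∀ n, t n ^ 2 ≤ T n := fun n => n.casesOn
    (by rw [hT, sum_range_one]; exact pow_le_of_le_one ht0pos.le ht0le two_ne_zero) htsq
  have hL : ∀ n, 0 < Lk n := fun n =>
    hL0.trans_le (monotone_nat_of_le_succ hLmono (Nat.zero_le n))
  have hprox : ∀ n x, Lk (n + 1) / 2 * ‖y (n + 1) - w n‖ ^ 2
      + Lk (n + 1) * ⟪w n - x, y (n + 1) - w n⟫ ≤ (F x + G x) - (F (y (n + 1)) + G (y (n + 1))) :=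
    fun n x => hy n ▸ prox_grad_inequality hF (hF' (w n)) hG (hP _ (hL (n + 1)) (w n)) (hdesc n) x
  have hweighted := gfdpg_weighted_sum_sq_le (q := fun x => F x + G x) hystar hL hLmono hprox hw0 ht
    hT hw k
  refine le_div_sqrt_of_le_of_weighted_sum_sq_le (le_inf' _ _ fun i _ => norm_nonneg _)
    (fun i hi => ?_) (fun i _ => sub_nonneg.2 (ht_sq i)) hsum (norm_nonneg _) hweighted
  exact inf'_le (fun j => ‖y j - w (j - 1)‖)
    (mem_Icc.2 ⟨Nat.le_add_left 1 i, Nat.succ_le_of_lt (mem_range.1 hi)⟩)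

/-- For the GFDPG sequences, for any `k ≥ 1` with `Σ_{i=0}^{k−1} (T_i − t_i²) > 0`,
`min_{1≤i≤k} ‖y_i − w_{i−1}‖ ≤ ‖y_0 − y_*‖ / √( Σ_{i=0}^{k−1} (T_i − t_i²) )`. -/
theorem gfdpg_inner_norm_bound
    {V : Type*} [NormedAddCommGroup V] [InnerProductSpace ℝ V] [FiniteDimensional ℝ V]
    (F G : V → ℝ) (LF : ℝ)
    (hF : ConvexOn ℝ Set.univ F) (hG : ConvexOn ℝ Set.univ G)
    (F' : V → V) (hF' : ∀ y, HasGradientAt F (F' y) y)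
    (hLip : ∀ y w : V, ‖F' y - F' w‖ ≤ LF * ‖y - w‖)
    -- q̃ := F + G attains its minimum at y_*
    (ystar : V) (hystar : ∀ y, F ystar + G ystar ≤ F y + G y)
    -- p_L(w) : the unique minimizer over y of Q_L(y, w)
    (P : ℝ → V → V)
    (hP : ∀ L, 0 < L → ∀ w, IsMinOn
      (fun y => F w + ⟪y - w, F' w⟫ + L / 2 * ‖y - w‖^2 + G y) Set.univ (P L w))
    -- the GFDPG method
    (y w : ℕ → V) (t T Lk : ℕ → ℝ)
    (hw0 : w 0 = y 0) (hL0 : 0 < Lk 0)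
    (ht0 : t 0 = T 0) (ht0pos : 0 < t 0) (ht0le : t 0 ≤ 1)
    (hT : ∀ k : ℕ, T k = ∑ i ∈ Finset.range (k+1), t i)
    (hLmono : ∀ k : ℕ, Lk k ≤ Lk (k+1))
    (hdesc : ∀ k : ℕ,
      F (P (Lk (k+1)) (w k)) + G (P (Lk (k+1)) (w k)) ≤
        F (w k) + ⟪P (Lk (k+1)) (w k) - w k, F' (w k)⟫
          + Lk (k+1) / 2 * ‖P (Lk (k+1)) (w k) - w k‖^2 + G (P (Lk (k+1)) (w k)))
    (hy : ∀ k : ℕ, y (k+1) = P (Lk (k+1)) (w k))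
    (htpos : ∀ k : ℕ, 0 < t (k+1)) (htsq : ∀ k : ℕ, t (k+1) ^ 2 ≤ T (k+1))
    (hw : ∀ k : ℕ, w (k+1) = y (k+1)
      + (((T k - t k) * t (k+1)) / (t k * T (k+1))) • (y (k+1) - y k)
      + (((t k ^ 2 - T k) * t (k+1)) / (t k * T (k+1))) • (y (k+1) - w k))
    (k : ℕ) (hk : 1 ≤ k)
    (hsum : 0 < ∑ i ∈ Finset.range k, (T i - t i ^ 2)) :
    (Finset.Icc 1 k).inf' (Finset.nonempty_Icc.mpr hk) (fun i => ‖y i - w (i-1)‖)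
      ≤ ‖y 0 - ystar‖ / Real.sqrt (∑ i ∈ Finset.range k, (T i - t i ^ 2)) :=
  gfdpg_inner_norm_bound_general F G hF hG F' hF' ystar hystar P hP y w t T Lk hw0 hL0 ht0pos ht0le
    hT hLmono hdesc hy htpos htsq hw k hk hsum
end
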